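/- Union is monotone with respect to ⪰: if v1 ⪰ v1' and v2 ⪰ v2' (all four collections being fixed points of ζ), then v1 ∪ v2 ⪰ v1' ∪ v2'. -/
import Mathlib


/-- The simplification operator `ζ`: keep only the sets of cardinality at most `N`
that do not strictly contain another set of the collection. -/
def zeta {α : Type*} [DecidableEq α] (N : ℕ) (v : Finset (Finset α)) : Finset (Finset α) :=
  v.filter (fun e => e.card ≤ N ∧ ¬ ∃ e' ∈ v, e' ≠ e ∧ e' ⊂ e)

/-- The relation `v ⪰ v'` : `ζ(v) = ζ(v ∪ v')`. -/
def succeq {α : Type*} [DecidableEq α] (N : ℕ) (v v' : Finset (Finset α)) : Prop :=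
  zeta N v = zeta N (v ∪ v')

lemma mem_zeta {α : Type*} [DecidableEq α] {N : ℕ} {v : Finset (Finset α)} {e : Finset α} :
    e ∈ zeta N v ↔ e ∈ v ∧ e.card ≤ N ∧ ¬ ∃ e' ∈ v, e' ≠ e ∧ e' ⊂ e := by
  simp [zeta, Finset.mem_filter]

lemma subset_exists {α : Type*} [DecidableEq α] {N : ℕ} {v v' : Finset (Finset α)}
    (h : zeta N v = v) (h' : zeta N v' = v') (hv : succeq N v v') :
    ∀ e ∈ v', ∃ x ∈ v, x ⊆ e := by
  intro e he
  by_cases hev : e ∈ v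
  · exact ⟨e, hev, subset_rfl⟩
  · have he' : e ∈ zeta N v' := by rw [h']; exact he
    rw [mem_zeta] at he'
    obtain ⟨_, hcard, hmin'⟩ := he'
    have hnz : e ∉ zeta N (v ∪ v') := by
      rw [← hv, h]; exact hev
    rw [mem_zeta] at hnz
    push_neg at hnz
    obtain ⟨x, hx, hxne, hxss⟩ := hnz (Finset.mem_union_right _ he) hcard
    rcases Finset.mem_union.mp hx with hxv | hxv'
    · exact ⟨x, hxv, hxss.subset⟩
    · exact absurd ⟨x, hxv', hxne, hxss⟩ hmin'

theorem succeq_union_mono {α : Type*} [DecidableEq α] [Fintype α] (N : ℕ)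
    (v1 v1' v2 v2' : Finset (Finset α))
    (h1 : zeta N v1 = v1) (h1' : zeta N v1' = v1')
    (h2 : zeta N v2 = v2) (h2' : zeta N v2' = v2')
    (hv1 : succeq N v1 v1') (hv2 : succeq N v2 v2') :
    succeq N (v1 ∪ v2) (v1' ∪ v2') := by
  have sub1 := subset_exists h1 h1' hv1
  have sub2 := subset_exists h2 h2' hv2
  unfold succeq
  ext e
  rw [mem_zeta, mem_zeta]
  constructor
  · rintro ⟨heW, hcard, hmin⟩
    refine ⟨Finset.mem_union_left _ heW, hcard, ?_⟩
    rintro ⟨x, hx, hxne, hxss⟩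
    rcases Finset.mem_union.mp hx with hxW | hxW'
    · exact hmin ⟨x, hxW, hxne, hxss⟩
    · have : ∃ y ∈ v1 ∪ v2, y ⊆ x := by
        rcases Finset.mem_union.mp hxW' with hx1 | hx2
        · obtain ⟨y, hy, hys⟩ := sub1 x hx1
          exact ⟨y, Finset.mem_union_left _ hy, hys⟩
        · obtain ⟨y, hy, hys⟩ := sub2 x hx2
          exact ⟨y, Finset.mem_union_right _ hy, hys⟩
      obtain ⟨y, hyW, hyx⟩ := this
      have hyss : y ⊂ e := lt_of_le_of_lt hyx hxss
      exact hmin ⟨y, hyW, hyss.ne, hyss⟩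
  · rintro ⟨heU, hcard, hmin⟩
    have heW : e ∈ v1 ∪ v2 := by
      by_cases hW : e ∈ v1 ∪ v2
      · exact hW
      · exfalso
        have h : e ∈ v1' ∪ v2' := by
          rcases Finset.mem_union.mp heU with h | h
          · exact absurd h hW
          · exact h
        have : ∃ y ∈ v1 ∪ v2, y ⊆ e := by
          rcases Finset.mem_union.mp h with h' | h'
          · obtain ⟨y, hy, hys⟩ := sub1 e h'
            exact ⟨y, Finset.mem_union_left _ hy, hys⟩
          · obtain ⟨y, hy, hys⟩ := sub2 e h'
            exact ⟨y, Finset.mem_union_right _ hy, hys⟩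
        obtain ⟨y, hyW, hys⟩ := this
        have hyne : y ≠ e := fun heq => hW (heq ▸ hyW)
        exact hmin ⟨y, Finset.mem_union_left _ hyW, hyne, hys.ssubset_of_ne hyne⟩
    refine ⟨heW, hcard, ?_⟩
    rintro ⟨x, hxW, hxne, hxss⟩
    exact hmin ⟨x, Finset.mem_union_left _ hxW, hxne, hxss⟩
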